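/- Let n, d ≥ 1, let W be a symmetric doubly stochastic n×n real matrix, J = 𝟙𝟙ᵀ, ρ the ℓ₂ operator norm of W − (1/n)J, and λ̄ the ℓ₂ operator norm of W − I. Let γ ∈ (0,1], α ≥ 0, W_γ = (1−γ)I + γW, and let x, y, η, σ be n×d real matrices. Define x⁺ = W_γ·(x+η) + γ(W−I)·σ − α·y. Then, writing Ā = (1/n)J·A for any n×d matrix A, ‖x⁺ − x̄⁺‖_F ≤ (1−γ(1−ρ))·‖x − x̄‖_F + α·‖y − ȳ‖_F + γλ̄·‖σ‖_F + (1−γ(1−ρ))·‖η − η̄‖_F, where ‖·‖_F is the Frobenius norm. -/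

import Mathlib

/-- The ℓ₂ operator norm of a real n×n matrix, i.e. the operator norm of the
induced linear map on Euclidean space. -/
noncomputable def l2OpNorm {n : ℕ} (M : Matrix (Fin n) (Fin n) ℝ) : ℝ :=
  ‖LinearMap.toContinuousLinearMap (Matrix.toEuclideanLin M)‖

/-- The Frobenius norm of an n×d matrix represented by its rows
v i ∈ ℝᵈ: ‖v‖_F = √(Σᵢ ‖vᵢ‖²). -/
noncomputable def rowFrobNorm {n d : ℕ} (v : Fin n → EuclideanSpace ℝ (Fin d)) : ℝ :=
  Real.sqrt (∑ i, ‖v i‖ ^ 2)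

lemma rowFrob_eq_norm {n d : ℕ} (v : Fin n → EuclideanSpace ℝ (Fin d)) :
    rowFrobNorm v = ‖(WithLp.toLp 2 v : PiLp 2 (fun _ : Fin n => EuclideanSpace ℝ (Fin d)))‖ := by
  rw [PiLp.norm_eq_of_L2]; rfl

lemma l2OpNorm_nonneg {n : ℕ} (M : Matrix (Fin n) (Fin n) ℝ) : 0 ≤ l2OpNorm M :=
  norm_nonneg _

lemma frob_mul_le {n d : ℕ} (M : Matrix (Fin n) (Fin n) ℝ)
    (v : Fin n → EuclideanSpace ℝ (Fin d)) :
    rowFrobNorm (fun i => ∑ j, M i j • v j) ≤ l2OpNorm M * rowFrobNorm v := by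
  set C := l2OpNorm M with hC
  have hC0 : 0 ≤ C := norm_nonneg _
  -- columnwise bound
  have key : ∀ k : Fin d,
      ∑ i, ((∑ j, M i j • v j : EuclideanSpace ℝ (Fin d)) k) ^ 2
        ≤ C ^ 2 * ∑ j, (v j k) ^ 2 := by
    intro k
    set u : EuclideanSpace ℝ (Fin n) := (WithLp.equiv 2 _).symm (fun j => v j k) with hu
    have happ : ∀ i, ((∑ j, M i j • v j : EuclideanSpace ℝ (Fin d)) k)
        = (Matrix.toEuclideanLin M u) i := by
      intro i
      have h0 : ((∑ j, M i j • v j : EuclideanSpace ℝ (Fin d)) k)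
          = ∑ j, M i j * v j k := by
        simp only [WithLp.ofLp_sum, Finset.sum_apply, WithLp.ofLp_smul, Pi.smul_apply, smul_eq_mul]
      rw [h0]
      show _ = (Matrix.mulVec M fun j => v j k) i
      rfl
    have hnorm : ‖Matrix.toEuclideanLin M u‖ ≤ C * ‖u‖ :=
      (LinearMap.toContinuousLinearMap (Matrix.toEuclideanLin M)).le_opNorm u
    have h1 : ∑ i, ((∑ j, M i j • v j : EuclideanSpace ℝ (Fin d)) k) ^ 2
        = ‖Matrix.toEuclideanLin M u‖ ^ 2 := by
      rw [EuclideanSpace.norm_eq]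
      rw [Real.sq_sqrt (by positivity)]
      refine Finset.sum_congr rfl fun i _ => ?_
      rw [happ i, Real.norm_eq_abs, sq_abs]
    have h2 : ‖u‖ ^ 2 = ∑ j, (v j k) ^ 2 := by
      rw [EuclideanSpace.norm_eq, Real.sq_sqrt (by positivity)]
      refine Finset.sum_congr rfl fun j _ => ?_
      rw [Real.norm_eq_abs, sq_abs]; rfl
    calc ∑ i, ((∑ j, M i j • v j : EuclideanSpace ℝ (Fin d)) k) ^ 2
        = ‖Matrix.toEuclideanLin M u‖ ^ 2 := h1
      _ ≤ (C * ‖u‖) ^ 2 := by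
          exact pow_le_pow_left₀ (norm_nonneg _) hnorm 2
      _ = C ^ 2 * ∑ j, (v j k) ^ 2 := by rw [mul_pow, h2]
  have hsum : ∑ i, ‖(∑ j, M i j • v j : EuclideanSpace ℝ (Fin d))‖ ^ 2
      ≤ C ^ 2 * ∑ j, ‖v j‖ ^ 2 := by
    have lhs : ∑ i, ‖(∑ j, M i j • v j : EuclideanSpace ℝ (Fin d))‖ ^ 2
        = ∑ k, ∑ i, ((∑ j, M i j • v j : EuclideanSpace ℝ (Fin d)) k) ^ 2 := by
      rw [Finset.sum_comm]
      refine Finset.sum_congr rfl fun i _ => ?_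
      rw [EuclideanSpace.norm_eq, Real.sq_sqrt (by positivity)]
      exact Finset.sum_congr rfl fun k _ => by rw [Real.norm_eq_abs, sq_abs]
    have rhs : ∑ j, ‖v j‖ ^ 2 = ∑ k, ∑ j, (v j k) ^ 2 := by
      rw [Finset.sum_comm]
      refine Finset.sum_congr rfl fun j _ => ?_
      rw [EuclideanSpace.norm_eq, Real.sq_sqrt (by positivity)]
      exact Finset.sum_congr rfl fun k _ => by rw [Real.norm_eq_abs, sq_abs]
    rw [lhs, rhs, Finset.mul_sum]
    exact Finset.sum_le_sum fun k _ => key k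
  rw [rowFrobNorm, rowFrobNorm]
  calc Real.sqrt (∑ i, ‖(∑ j, M i j • v j : EuclideanSpace ℝ (Fin d))‖ ^ 2)
      ≤ Real.sqrt (C ^ 2 * ∑ j, ‖v j‖ ^ 2) := Real.sqrt_le_sqrt hsum
    _ = C * Real.sqrt (∑ j, ‖v j‖ ^ 2) := by
        rw [Real.sqrt_mul (by positivity), Real.sqrt_sq hC0]

lemma sum_dev {n d : ℕ} (hn : 1 ≤ n) (v : Fin n → EuclideanSpace ℝ (Fin d)) :
    ∑ i, (v i - (n : ℝ)⁻¹ • (∑ j, v j)) = 0 := by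
  have hn' : (n : ℝ) ≠ 0 := Nat.cast_ne_zero.mpr (by omega)
  rw [Finset.sum_sub_distrib, Finset.sum_const, Finset.card_univ, Fintype.card_fin,
    ← Nat.cast_smul_eq_nsmul ℝ, smul_smul, mul_inv_cancel₀ hn', one_smul, sub_self]

lemma sum_matvec {n d : ℕ} (M : Matrix (Fin n) (Fin n) ℝ)
    (v : Fin n → EuclideanSpace ℝ (Fin d)) :
    ∑ i, ∑ j, M i j • v j = ∑ j, (∑ i, M i j) • v j := by
  rw [Finset.sum_comm]
  exact Finset.sum_congr rfl fun j _ => by rw [Finset.sum_smul]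

lemma rowFrob_nonneg {n d : ℕ} (v : Fin n → EuclideanSpace ℝ (Fin d)) :
    0 ≤ rowFrobNorm v := Real.sqrt_nonneg _

lemma rowFrob_add_le {n d : ℕ} (v w : Fin n → EuclideanSpace ℝ (Fin d)) :
    rowFrobNorm (fun i => v i + w i) ≤ rowFrobNorm v + rowFrobNorm w := by
  rw [rowFrob_eq_norm, rowFrob_eq_norm, rowFrob_eq_norm]
  exact norm_add_le (E := PiLp 2 (fun _ : Fin n => EuclideanSpace ℝ (Fin d))) (WithLp.toLp 2 v) (WithLp.toLp 2 w)

lemma rowFrob_sub_le {n d : ℕ} (v w : Fin n → EuclideanSpace ℝ (Fin d)) :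
    rowFrobNorm (fun i => v i - w i) ≤ rowFrobNorm v + rowFrobNorm w := by
  rw [rowFrob_eq_norm, rowFrob_eq_norm, rowFrob_eq_norm]
  exact norm_sub_le (E := PiLp 2 (fun _ : Fin n => EuclideanSpace ℝ (Fin d))) (WithLp.toLp 2 v) (WithLp.toLp 2 w)

lemma rowFrob_smul {n d : ℕ} (c : ℝ) (v : Fin n → EuclideanSpace ℝ (Fin d)) :
    rowFrobNorm (fun i => c • v i) = |c| * rowFrobNorm v := by
  rw [rowFrob_eq_norm, rowFrob_eq_norm]
  have h : (WithLp.toLp 2 (fun i => c • v i) : PiLp 2 (fun _ : Fin n => EuclideanSpace ℝ (Fin d)))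
      = c • (WithLp.toLp 2 v : PiLp 2 (fun _ : Fin n => EuclideanSpace ℝ (Fin d))) := rfl
  rw [h, norm_smul, Real.norm_eq_abs]

set_option maxHeartbeats 1000000 in
/-- Deterministic form of inequality (14) in the proof of Lemma 1 of
"Compressed Differentially Private Distributed Optimization with Linear
Convergence": the one-step consensus-error bound for the CPGT state update
x⁺ = W_γ(x+η) + γ(W−I)σ − αy. Matrices with rows in ℝᵈ are represented as
functions Fin n → EuclideanSpace ℝ (Fin d); matrix multiplication acts
rowwise, and Ā = (1/n)𝟙𝟙ᵀA has every row equal to (1/n)Σⱼ A j. Here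
ρ = ‖W − (1/n)𝟙𝟙ᵀ‖₂ and λ̄ = ‖W − I‖₂. -/
theorem stmt_10 {n d : ℕ} (hn : 1 ≤ n) (hd : 1 ≤ d)
    (W : Matrix (Fin n) (Fin n) ℝ)
    (hWsymm : W.IsSymm)
    (hWnonneg : ∀ i j, 0 ≤ W i j)
    (hWrow : ∀ i, ∑ j, W i j = 1)
    (hWcol : ∀ j, ∑ i, W i j = 1)
    (J : Matrix (Fin n) (Fin n) ℝ) (hJ : J = Matrix.of fun _ _ => (1 : ℝ))
    (ρ lam : ℝ)
    (hρ : ρ = l2OpNorm (W - ((n : ℝ))⁻¹ • J))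
    (hlam : lam = l2OpNorm (W - 1))
    (γ α : ℝ) (hγ0 : 0 < γ) (hγ1 : γ ≤ 1) (hα : 0 ≤ α)
    (Wγ : Matrix (Fin n) (Fin n) ℝ)
    (hWγ : Wγ = (1 - γ) • (1 : Matrix (Fin n) (Fin n) ℝ) + γ • W)
    (x y η σ xplus : Fin n → EuclideanSpace ℝ (Fin d))
    (hxplus : ∀ i, xplus i
        = (∑ j, Wγ i j • (x j + η j))
          + γ • (∑ j, (W - 1) i j • σ j)
          - α • y i) :
    rowFrobNorm (fun i => xplus i - (n : ℝ)⁻¹ • (∑ j, xplus j))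
      ≤ (1 - γ * (1 - ρ)) * rowFrobNorm (fun i => x i - (n : ℝ)⁻¹ • (∑ j, x j))
        + α * rowFrobNorm (fun i => y i - (n : ℝ)⁻¹ • (∑ j, y j))
        + γ * lam * rowFrobNorm σ
        + (1 - γ * (1 - ρ)) * rowFrobNorm (fun i => η i - (n : ℝ)⁻¹ • (∑ j, η j)) := by
  have hn' : (n : ℝ) ≠ 0 := Nat.cast_ne_zero.mpr (by omega)
  -- means
  set mx : EuclideanSpace ℝ (Fin d) := (n : ℝ)⁻¹ • (∑ j, x j) with hmx
  set my : EuclideanSpace ℝ (Fin d) := (n : ℝ)⁻¹ • (∑ j, y j) with hmy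
  set mη : EuclideanSpace ℝ (Fin d) := (n : ℝ)⁻¹ • (∑ j, η j) with hmη
  set mxη : EuclideanSpace ℝ (Fin d) := (n : ℝ)⁻¹ • (∑ j, (x j + η j)) with hmxη
  set p : Fin n → EuclideanSpace ℝ (Fin d) := fun i => (x i + η i) - mxη with hpdef
  have hpsum : ∑ j, p j = 0 := by
    exact sum_dev hn (fun j => x j + η j)
  have hmxη_split : mxη = mx + mη := by
    rw [hmx, hmη, hmxη, Finset.sum_add_distrib, smul_add]
  -- entries of Wγ
  have hWγ_apply : ∀ i j, Wγ i j = (1 - γ) * (1 : Matrix (Fin n) (Fin n) ℝ) i j + γ * W i j := by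
    intro i j; rw [hWγ]; simp [Matrix.add_apply]
  have hone_row : ∀ i : Fin n, ∑ j, (1 : Matrix (Fin n) (Fin n) ℝ) i j = 1 := by
    intro i; simp [Matrix.one_apply]
  have hone_col : ∀ j : Fin n, ∑ i, (1 : Matrix (Fin n) (Fin n) ℝ) i j = 1 := by
    intro j; simp [Matrix.one_apply]
  have hWγrow : ∀ i, ∑ j, Wγ i j = 1 := by
    intro i
    simp only [hWγ_apply, Finset.sum_add_distrib, ← Finset.mul_sum, hWrow, hone_row]
    ring
  have hWγcol : ∀ j, ∑ i, Wγ i j = 1 := by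
    intro j
    simp only [hWγ_apply, Finset.sum_add_distrib, ← Finset.mul_sum]
    rw [hWcol, hone_col]
    ring
  have hW1col : ∀ j, ∑ i, (W - 1 : Matrix (Fin n) (Fin n) ℝ) i j = 0 := by
    intro j
    simp only [Matrix.sub_apply, Finset.sum_sub_distrib, hWcol, hone_col, sub_self]
  -- sum of xplus
  have hsx : ∑ i, xplus i = (∑ j, (x j + η j)) - α • (∑ i, y i) := by
    calc ∑ i, xplus i
        = ∑ i, ((∑ j, Wγ i j • (x j + η j)) + γ • (∑ j, (W - 1) i j • σ j) - α • y i) :=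
          Finset.sum_congr rfl fun i _ => hxplus i
      _ = (∑ i, ∑ j, Wγ i j • (x j + η j)) + γ • (∑ i, ∑ j, (W - 1) i j • σ j)
          - α • (∑ i, y i) := by
          rw [Finset.sum_sub_distrib, Finset.sum_add_distrib, Finset.smul_sum, Finset.smul_sum]
      _ = (∑ j, (x j + η j)) - α • (∑ i, y i) := by
          rw [sum_matvec, sum_matvec]
          simp only [hWγcol, hW1col, one_smul, zero_smul, Finset.sum_const_zero, smul_zero,
            add_zero]
  have hmxp : (n : ℝ)⁻¹ • (∑ j, xplus j) = mxη - α • my := by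
    rw [hsx, smul_sub, hmxη, hmy, smul_comm]
  -- decomposition identity
  have hid : ∀ i, xplus i - (n : ℝ)⁻¹ • (∑ j, xplus j)
      = (∑ j, Wγ i j • p j) + γ • (∑ j, (W - 1) i j • σ j) - α • (y i - my) := by
    intro i
    have hA : ∑ j, Wγ i j • p j = (∑ j, Wγ i j • (x j + η j)) - mxη := by
      simp only [hpdef, smul_sub, Finset.sum_sub_distrib, ← Finset.sum_smul, hWγrow i, one_smul]
    rw [hxplus i, hmxp, hA, smul_sub]
    abel
  -- pieces
  set A : Fin n → EuclideanSpace ℝ (Fin d) := fun i => ∑ j, Wγ i j • p j with hA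
  set B : Fin n → EuclideanSpace ℝ (Fin d) := fun i => ∑ j, (W - 1) i j • σ j with hB
  set Cc : Fin n → EuclideanSpace ℝ (Fin d) := fun i => y i - my with hCc
  have hLHS : rowFrobNorm (fun i => xplus i - (n : ℝ)⁻¹ • (∑ j, xplus j))
      = rowFrobNorm (fun i => (A i + γ • B i) - α • Cc i) := by
    congr 1; funext i; rw [hid i]
  -- triangle
  have htri : rowFrobNorm (fun i => (A i + γ • B i) - α • Cc i)
      ≤ rowFrobNorm A + γ * rowFrobNorm B + α * rowFrobNorm Cc := by
    have h1 : rowFrobNorm (fun i => (A i + γ • B i) - α • Cc i)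
        ≤ rowFrobNorm (fun i => A i + γ • B i) + rowFrobNorm (fun i => α • Cc i) :=
      rowFrob_sub_le _ _
    have h2 : rowFrobNorm (fun i => A i + γ • B i)
        ≤ rowFrobNorm A + rowFrobNorm (fun i => γ • B i) := rowFrob_add_le _ _
    have h3 : rowFrobNorm (fun i => γ • B i) = γ * rowFrobNorm B := by
      rw [rowFrob_smul, abs_of_pos hγ0]
    have h4 : rowFrobNorm (fun i => α • Cc i) = α * rowFrobNorm Cc := by
      rw [rowFrob_smul, abs_of_nonneg hα]
    linarith
  -- bound on B
  have hBle : rowFrobNorm B ≤ lam * rowFrobNorm σ := by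
    rw [hlam]; exact frob_mul_le (W - 1) σ
  -- bound on A
  have hρ0 : 0 ≤ ρ := hρ ▸ l2OpNorm_nonneg _
  set Mρ : Matrix (Fin n) (Fin n) ℝ := W - (n : ℝ)⁻¹ • J with hMρ
  have hAdecomp : ∀ i, A i = (1 - γ) • p i + γ • (∑ j, Mρ i j • p j) := by
    intro i
    have hdelta : ∑ j, ((1 : Matrix (Fin n) (Fin n) ℝ) i j) • p j = p i := by
      simp [Matrix.one_apply]
    have hJrow : ∑ j, (((n : ℝ)⁻¹ • J) i j) • p j = 0 := by
      simp only [Matrix.smul_apply, hJ, Matrix.of_apply, smul_eq_mul, mul_one,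
        ← Finset.smul_sum, hpsum, smul_zero]
    have hWsum : ∑ j, W i j • p j = ∑ j, Mρ i j • p j := by
      have : ∑ j, Mρ i j • p j
          = ∑ j, W i j • p j - ∑ j, (((n : ℝ)⁻¹ • J) i j) • p j := by
        simp only [hMρ, Matrix.sub_apply, sub_smul, Finset.sum_sub_distrib]
      rw [this, hJrow, sub_zero]
    calc A i = ∑ j, ((1 - γ) * (1 : Matrix (Fin n) (Fin n) ℝ) i j + γ * W i j) • p j := by
          rw [hA]; exact Finset.sum_congr rfl fun j _ => by rw [hWγ_apply]
      _ = (1 - γ) • (∑ j, ((1 : Matrix (Fin n) (Fin n) ℝ) i j) • p j)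
          + γ • (∑ j, W i j • p j) := by
          simp only [add_smul, mul_smul, Finset.sum_add_distrib, Finset.smul_sum]
      _ = (1 - γ) • p i + γ • (∑ j, Mρ i j • p j) := by rw [hdelta, hWsum]
  have hAle : rowFrobNorm A ≤ (1 - γ) * rowFrobNorm p + γ * (ρ * rowFrobNorm p) := by
    have h1 : rowFrobNorm A
        = rowFrobNorm (fun i => (1 - γ) • p i + γ • (∑ j, Mρ i j • p j)) := by
      congr 1; funext i; exact hAdecomp i
    have h2 : rowFrobNorm (fun i => (1 - γ) • p i + γ • (∑ j, Mρ i j • p j))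
        ≤ rowFrobNorm (fun i => (1 - γ) • p i)
          + rowFrobNorm (fun i => γ • (∑ j, Mρ i j • p j)) := rowFrob_add_le _ _
    have h3 : rowFrobNorm (fun i => (1 - γ) • p i) = (1 - γ) * rowFrobNorm p := by
      rw [rowFrob_smul, abs_of_nonneg (by linarith)]
    have h4 : rowFrobNorm (fun i => γ • (∑ j, Mρ i j • p j))
        = γ * rowFrobNorm (fun i => ∑ j, Mρ i j • p j) := by
      rw [rowFrob_smul, abs_of_pos hγ0]
    have h5 : rowFrobNorm (fun i => ∑ j, Mρ i j • p j) ≤ ρ * rowFrobNorm p := by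
      rw [hρ]; exact frob_mul_le Mρ p
    have hγB : 0 ≤ γ := le_of_lt hγ0
    have h6 := mul_le_mul_of_nonneg_left h5 hγB
    linarith
  -- p vs x, η deviations
  have hPle : rowFrobNorm p
      ≤ rowFrobNorm (fun i => x i - mx) + rowFrobNorm (fun i => η i - mη) := by
    have : p = fun i => (x i - mx) + (η i - mη) := by
      funext i; rw [hpdef, hmxη_split]; abel
    rw [this]
    exact rowFrob_add_le _ _
  -- combine
  have hX := rowFrob_nonneg (fun i => x i - mx)
  have hH := rowFrob_nonneg (fun i => η i - mη)
  have hY := rowFrob_nonneg Cc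
  have hS := rowFrob_nonneg σ
  have hP := rowFrob_nonneg p
  have hcoef : 0 ≤ 1 - γ + γ * ρ := by
    have := mul_nonneg hγ0.le hρ0; linarith
  have hfin : (1 - γ + γ * ρ) * rowFrobNorm p
      ≤ (1 - γ + γ * ρ) * (rowFrobNorm (fun i => x i - mx) + rowFrobNorm (fun i => η i - mη)) :=
    mul_le_mul_of_nonneg_left hPle hcoef
  have hγlamB := mul_le_mul_of_nonneg_left hBle (le_of_lt hγ0)
  rw [hLHS]
  nlinarith [htri, hAle, hfin, hγlamB]
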